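/- Suppose 2 ∈ D_h^{(p^m)} with δ_1 = f/2 ∤ h. Then A_v ∉ F_4 for every v. -/

import Mathlib

/-!
Put `ζ_s = β ^ p ^ (m - s)`, a primitive `p ^ s`-th root of unity, and
`L_s = p ^ (s - 1) * f`. The `s`-th summand of `A_v` is the sum of `L_s / 2` consecutive
Gaussian periods of `ζ_s` of index `L_s`. As `g` generates `(ℤ/p^s)ˣ`, all `L_s` periods
together sum to the Ramanujan sum `∑_{a ∈ (ℤ/p^s)ˣ} ζ_s ^ a`, which is `-1` for `s = 1` and
`0` otherwise. Shifting `v` by `δ = p ^ (m - 1) * f / 2`, an odd multiple of `L_s / 2`, swaps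
the two halves, so `A_v + A_{v+δ} = -1`, i.e. `A_{v+δ} = A_v + 1` in characteristic `2`.
Frobenius and `2 ≡ g ^ h` (up to a multiple of the period `2δ`) give `A_v ^ 2 = A_{v+h}`, so
`A_v ^ 4 = A_v` makes `n ↦ A_{v+2nh}` constant. Since `f / 2 ∤ h`, some `2nh` is an odd
multiple of `δ`, and then `A_v = A_v + 1`.
-/

open Finset Function Nat

theorem Function.Periodic.sum_range_add {M : Type*} [AddCancelCommMonoid M] {η : ℕ → M}
    {n : ℕ} (hη : Periodic η n) (v : ℕ) : ∑ j ∈ range n, η (v + j) = ∑ j ∈ range n, η j := by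
  induction v with
  | zero => simp
  | succ v ih =>
    have h := (sum_range_succ' (fun j => η (v + j)) n).symm.trans (sum_range_succ _ n)
    rw [add_zero, hη v] at h
    rw [← ih, ← add_right_cancel h]
    simp only [add_right_comm v 1, add_assoc]

theorem sum_range_mul_eq_sum_sum {M : Type*} [AddCommMonoid M] (η : ℕ → M) (L e : ℕ) :
    ∑ j ∈ range (L * e), η j = ∑ i ∈ range L, ∑ t ∈ range e, η (i + L * t) := by
  rw [sum_comm]
  induction e with
  | zero => simp
  | succ e ih =>
    rw [mul_add_one, sum_range_add, ih, sum_range_succ]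
    simp only [add_comm (L * e)]

theorem periodic_pow_pow {M : Type*} [Monoid M] {ζ : M} {q g n : ℕ} (hζ : ζ ^ q = 1)
    (hg : (g : ZMod q) ^ n = 1) : Periodic (fun x => ζ ^ g ^ x) n := fun x =>
  pow_eq_pow_of_modEq ((ZMod.natCast_eq_natCast_iff _ _ _).1 <| by
    push_cast; rw [pow_add, hg, mul_one]) hζ

theorem sum_range_totient_pow_mod {M : Type*} [AddCommMonoid M] {q g : ℕ} [NeZero q]
    (hg : orderOf (g : ZMod q) = φ q) (G : ℕ → M) :
    ∑ j ∈ range (φ q), G (g ^ j % q) = ∑ a ∈ range q with q.Coprime a, G a := by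
  have hunit : IsUnit (g : ZMod q) :=
    (isOfFinOrder_iff_pow_eq_one.2
      ⟨_, hg ▸ totient_pos.2 (NeZero.pos q), pow_orderOf_eq_one _⟩).isUnit
  have hinj : Set.InjOn (fun j => g ^ j % q) (range (φ q)) := fun i hi j hj hij => by
    rw [coe_range, ← hg] at hi hj
    refine pow_injOn_Iio_orderOf hi hj ?_
    simpa using congrArg (fun x : ℕ => (x : ZMod q)) hij
  have hmaps : ∀ j, g ^ j % q ∈ ({a ∈ range q | q.Coprime a} : Finset ℕ) := fun j => by
    refine mem_filter.2 ⟨mem_range.2 (mod_lt _ (NeZero.pos q)), coprime_comm.1 ?_⟩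
    rw [← ZMod.isUnit_iff_coprime, ZMod.natCast_mod]
    push_cast
    exact hunit.pow j
  have himage : (range (φ q)).image (fun j => g ^ j % q) = {a ∈ range q | q.Coprime a} :=
    eq_of_subset_of_card_le (image_subset_iff.2 fun j _ => hmaps j) <| by
      rw [Finset.card_image_of_injOn hinj, card_range, totient_eq_card_coprime]
  rw [← himage, sum_image hinj]

theorem IsPrimitiveRoot.sum_pow_coprime_prime_pow {R : Type*} [CommRing R] [IsDomain R]
    {ζ : R} {p s : ℕ} (hp : p.Prime) (hs : 1 ≤ s) (hζ : IsPrimitiveRoot ζ (p ^ s)) :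
    ∑ a ∈ range (p ^ s) with (p ^ s).Coprime a, ζ ^ a = if s = 1 then -1 else 0 := by
  have hps : p ^ s = p * p ^ (s - 1) := by rw [← pow_succ']; congr 1; omega
  have hmem : ∀ a,
      a ∈ {a ∈ range (p ^ s) | ¬ (p ^ s).Coprime a} ↔ a < p * p ^ (s - 1) ∧ p ∣ a := fun a => by
    rw [mem_filter, mem_range, coprime_pow_left_iff (by omega), hp.coprime_iff_not_dvd, not_not,
      hps]
  have hmultiples : ∑ a ∈ range (p ^ s) with ¬ (p ^ s).Coprime a, ζ ^ a
      = ∑ b ∈ range (p ^ (s - 1)), (ζ ^ p) ^ b := by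
    refine sum_nbij' (· / p) (p * ·)
      (fun a ha => mem_range.2 (Nat.div_lt_of_lt_mul ((hmem a).1 ha).1))
      (fun b hb => (hmem _).2
        ⟨Nat.mul_lt_mul_of_pos_left (mem_range.1 hb) hp.pos, dvd_mul_right p b⟩)
      (fun a ha => Nat.mul_div_cancel' ((hmem a).1 ha).2)
      (fun b _ => Nat.mul_div_cancel_left b hp.pos)
      (fun a ha => by rw [← pow_mul, Nat.mul_div_cancel' ((hmem a).1 ha).2])
  have htotal := sum_filter_add_sum_filter_not (range (p ^ s)) ((p ^ s).Coprime ·) (ζ ^ ·)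
  rw [hζ.geom_sum_eq_zero (one_lt_pow (by omega) hp.one_lt), hmultiples] at htotal
  have hζp : IsPrimitiveRoot (ζ ^ p) (p ^ (s - 1)) := by
    simpa [hps, hp.ne_zero] using hζ.pow_of_dvd hp.ne_zero (hps ▸ dvd_mul_right p _)
  split_ifs with hs1
  · subst hs1
    simpa [eq_neg_iff_add_eq_zero] using htotal
  · rwa [hζp.geom_sum_eq_zero (one_lt_pow (by omega) hp.one_lt), add_zero] at htotal

section GaussPeriods

variable {R : Type*} [CommRing R]

def gaussPeriod (ζ : R) (g L e u : ℕ) : R := ∑ t ∈ range e, ζ ^ g ^ (u + L * t)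

def halfGaussSum (ζ : R) (g L e v : ℕ) : R :=
  ∑ i ∈ range (L / 2), gaussPeriod ζ g L e (v + i)

variable {ζ : R} {q g L e : ℕ}

theorem gaussPeriod_periodic (hζ : ζ ^ q = 1) (hg : (g : ZMod q) ^ (L * e) = 1) :
    Periodic (gaussPeriod ζ g L e) L := fun u => by
  have hper : Periodic (fun t => ζ ^ g ^ (u + L * t)) e := fun t => by
    simpa only [mul_add, ← add_assoc] using periodic_pow_pow hζ hg (u + L * t)
  simpa only [gaussPeriod, mul_add, mul_one, add_assoc] using hper.sum_range_add 1

theorem sum_range_gaussPeriod (hζ : ζ ^ q = 1) (hg : (g : ZMod q) ^ (L * e) = 1) (v : ℕ) :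
    ∑ i ∈ range L, gaussPeriod ζ g L e (v + i) = ∑ j ∈ range (L * e), ζ ^ g ^ j := by
  rw [← (periodic_pow_pow hζ hg).sum_range_add v, sum_range_mul_eq_sum_sum]
  simp only [gaussPeriod, add_assoc]

theorem sum_range_gaussPeriod_prime_pow [IsDomain R] {p s : ℕ} (hp : p.Prime) (hs : 1 ≤ s)
    (hζ : IsPrimitiveRoot ζ (p ^ s)) (hg : orderOf (g : ZMod (p ^ s)) = φ (p ^ s))
    (hLe : L * e = φ (p ^ s)) (v : ℕ) :
    ∑ i ∈ range L, gaussPeriod ζ g L e (v + i) = if s = 1 then -1 else 0 := by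
  have : NeZero (p ^ s) := ⟨pow_ne_zero _ hp.ne_zero⟩
  rw [sum_range_gaussPeriod hζ.pow_eq_one (by rw [hLe, ← hg, pow_orderOf_eq_one]), hLe,
    ← hζ.sum_pow_coprime_prime_pow hp hs, ← sum_range_totient_pow_mod hg]
  exact sum_congr rfl fun j _ => (pow_eq_pow_of_modEq (Nat.mod_modEq _ _) hζ.pow_eq_one).symm

theorem halfGaussSum_periodic (hη : Periodic (gaussPeriod ζ g L e) L) :
    Periodic (halfGaussSum ζ g L e) L := fun v => by
  simp only [halfGaussSum, add_right_comm v L, hη _]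

theorem halfGaussSum_add_halfGaussSum_half (hL : Even L) (v : ℕ) :
    halfGaussSum ζ g L e v + halfGaussSum ζ g L e (v + L / 2)
      = ∑ i ∈ range L, gaussPeriod ζ g L e (v + i) := by
  obtain ⟨K, rfl⟩ := hL
  rw [halfGaussSum, halfGaussSum, show (K + K) / 2 = K by omega, sum_range_add]
  simp only [add_assoc]

theorem halfGaussSum_add_halfGaussSum_shift [IsDomain R] {p s c : ℕ} (hp : p.Prime)
    (hs : 1 ≤ s) (hζ : IsPrimitiveRoot ζ (p ^ s)) (hg : orderOf (g : ZMod (p ^ s)) = φ (p ^ s))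
    (hLe : L * e = φ (p ^ s)) (hL : Even L) (hc : Odd c) (v : ℕ) :
    halfGaussSum ζ g L e v + halfGaussSum ζ g L e (v + L / 2 * c)
      = if s = 1 then -1 else 0 := by
  obtain ⟨k, rfl⟩ := hc
  have hper := halfGaussSum_periodic
    (gaussPeriod_periodic hζ.pow_eq_one (by rw [hLe, ← hg, pow_orderOf_eq_one]))
  have hshift : v + L / 2 * (2 * k + 1) = v + L / 2 + k * L := by
    obtain ⟨K, rfl⟩ := hL
    rw [show (K + K) / 2 = K by omega]
    ring
  rw [hshift, ← Nat.cast_id k, hper.nat_mul k, halfGaussSum_add_halfGaussSum_half hL,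
    sum_range_gaussPeriod_prime_pow hp hs hζ hg hLe]

theorem gaussPeriod_sq [CharP R 2] {h : ℕ} (hζ : ζ ^ q = 1) (h2 : 2 ≡ g ^ h [MOD q])
    (u : ℕ) :
    gaussPeriod ζ g L e u ^ 2 = gaussPeriod ζ g L e (u + h) := by
  rw [gaussPeriod, sum_pow_char]
  refine sum_congr rfl fun t _ => ?_
  rw [← pow_mul, add_right_comm u h, pow_add g _ h]
  exact pow_eq_pow_of_modEq (h2.mul_left _) hζ

end GaussPeriods

section HalfGaussTotal

variable {R : Type*} [CommRing R]

/-- The paper's `A_v`; its `s`-th summand is `H̄_v^{(p^s)}(β)`. -/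
def halfGaussTotal (β : R) (p m e f g v : ℕ) : R :=
  ∑ s ∈ Icc 1 m, halfGaussSum (β ^ p ^ (m - s)) g (p ^ (s - 1) * f) e v

variable {β : R} {p m e f g : ℕ}

theorem halfGaussTotal_add_shift [IsDomain R] (hp : p.Prime) (hodd : Odd p) (hm : 1 ≤ m)
    (hβ : IsPrimitiveRoot β (p ^ m))
    (hroot : ∀ j, 1 ≤ j → j ≤ m → orderOf (g : ZMod (p ^ j)) = φ (p ^ j))
    (hef : p - 1 = e * f) (hf : Even f) (v : ℕ) :
    halfGaussTotal β p m e f g v + halfGaussTotal β p m e f g (v + p ^ (m - 1) * (f / 2))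
      = -1 := by
  rw [halfGaussTotal, halfGaussTotal, ← sum_add_distrib]
  calc _ = ∑ s ∈ Icc 1 m, if s = 1 then (-1 : R) else 0 := sum_congr rfl fun s hs => ?_
    _ = -1 := by rw [sum_ite_eq', if_pos (mem_Icc.2 ⟨le_rfl, hm⟩)]
  obtain ⟨hs1, hsm⟩ := mem_Icc.1 hs
  have hζ : IsPrimitiveRoot (β ^ p ^ (m - s)) (p ^ s) := by
    have := hβ.pow_of_dvd (pow_ne_zero _ hp.ne_zero) (pow_dvd_pow p (Nat.sub_le m s))
    rwa [Nat.pow_div (Nat.sub_le m s) hp.pos, Nat.sub_sub_self hsm] at this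
  have hshift : p ^ (m - 1) * (f / 2) = p ^ (s - 1) * f / 2 * p ^ (m - s) := by
    rw [Nat.mul_div_assoc _ (even_iff_two_dvd.1 hf), mul_right_comm, ← pow_add]
    congr 2
    omega
  rw [hshift]
  exact halfGaussSum_add_halfGaussSum_shift hp hs1 hζ (hroot s hs1 hsm)
    (by rw [totient_prime_pow hp hs1, hef]; ring) (hf.mul_left _) hodd.pow v

theorem halfGaussTotal_sq [CharP R 2] {h : ℕ} (hβ : β ^ p ^ m = 1)
    (h2 : 2 ≡ g ^ h [MOD p ^ m]) (v : ℕ) :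
    halfGaussTotal β p m e f g v ^ 2 = halfGaussTotal β p m e f g (v + h) := by
  simp only [halfGaussTotal, halfGaussSum, sum_pow_char]
  refine sum_congr rfl fun s hs => sum_congr rfl fun i _ => ?_
  have hsm := (mem_Icc.1 hs).2
  have hζ : (β ^ p ^ (m - s)) ^ p ^ s = 1 := by
    rw [← pow_mul, ← pow_add, Nat.sub_add_cancel hsm, hβ]
  rw [gaussPeriod_sq hζ (h2.of_dvd (pow_dvd_pow p hsm)), add_right_comm]

end HalfGaussTotal

section CharTwo

variable {R : Type*} [CommRing R] {A : ℕ → R} {δ : ℕ}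

theorem apply_add_mul_eq_add_natCast (hδ : ∀ v, A (v + δ) = A v + 1) (v j : ℕ) :
    A (v + δ * j) = A v + j := by
  induction j with
  | zero => simp
  | succ j ih => rw [mul_add_one, ← add_assoc, hδ, ih, Nat.cast_succ, add_assoc]

variable [CharP R 2]

theorem apply_add_two_mul_mul (hδ : ∀ v, A (v + δ) = A v + 1) (v j : ℕ) :
    A (v + 2 * δ * j) = A v := by
  rw [show 2 * δ * j = δ * (2 * j) by ring, apply_add_mul_eq_add_natCast hδ]
  simp [CharTwo.two_eq_zero]

theorem pow_four_ne_self_of_apply_add_eq_sq [Nontrivial R] {h n k : ℕ}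
    (hδ : ∀ v, A (v + δ) = A v + 1) (hsq : ∀ v, A (v + h) = A v ^ 2)
    (hnk : 2 * n * h = δ * (2 * k + 1)) (v : ℕ) : A v ^ 4 ≠ A v := by
  intro h4
  have hcycle : ∀ j, A (v + 2 * h * j) = A v := by
    intro j
    induction j with
    | zero => simp
    | succ j ih =>
      rw [show v + 2 * h * (j + 1) = v + 2 * h * j + h + h by ring, hsq, hsq, ih, ← pow_mul]
      exact h4
  have := hcycle n
  rw [mul_right_comm, hnk, apply_add_mul_eq_add_natCast hδ] at this
  simp [CharTwo.two_eq_zero] at this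

end CharTwo

theorem exists_two_mul_mul_eq_mul_odd {N h : ℕ} (c : ℕ) (hh : ¬ 2 ^ N ∣ h) :
    ∃ n k, 2 * n * h = c * 2 ^ N * (2 * k + 1) := by
  obtain ⟨a, u, hu, rfl⟩ :=
    exists_eq_two_pow_mul_odd (n := h) (by rintro rfl; exact hh (dvd_zero _))
  have haN : a < N := by
    by_contra! hNa
    exact hh (Dvd.dvd.mul_right (pow_dvd_pow 2 hNa) u)
  obtain ⟨k, hk⟩ := hu.mul hu
  refine ⟨2 ^ (N - 1 - a) * c * u, k, ?_⟩
  have hpow : 2 * 2 ^ (N - 1 - a) * 2 ^ a = 2 ^ N := by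
    rw [← pow_succ', ← pow_add]
    congr 1
    omega
  rw [← hk, ← hpow]
  ring

theorem A_not_mem_F4_general (p m e f r g h : ℕ) (hp : p.Prime)
    (hm : 1 ≤ m) (hr : 1 ≤ r) (hf : f = 2 ^ r) (hef : p - 1 = e * f)
    (hroot : ∀ j, 1 ≤ j → j ≤ m → orderOf (g : ZMod (p ^ j)) = Nat.totient (p ^ j))
    (h2 : ∃ t < e, (2 : ZMod (p ^ m)) = (g : ZMod (p ^ m)) ^ (h + p ^ (m - 1) * f * t))
    (hh : ¬ (f / 2) ∣ h)
    {F : Type*} [Field F] (hchar : CharP F 2) (β : F) (hβ : orderOf β = p ^ m) :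
    let A : ℕ → F := fun v => ∑ s ∈ Finset.Icc 1 m,
      ∑ i ∈ Finset.range (p ^ (s - 1) * f / 2), ∑ t ∈ Finset.range e,
        β ^ (p ^ (m - s) * g ^ (v + i + p ^ (s - 1) * f * t))
    ∀ v : ℕ, (A v) ^ 4 ≠ A v := by
  intro A v
  have hA : A = halfGaussTotal β p m e f g := by
    funext v
    simp only [A, halfGaussTotal, halfGaussSum, gaussPeriod, pow_mul]
  have hfeven : Even f := hf ▸ Nat.even_pow.2 ⟨even_two, by omega⟩
  have hhalf : f / 2 = 2 ^ (r - 1) := by rw [hf, ← Nat.pow_div hr two_pos, pow_one]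
  have hodd : Odd p := hp.eq_two_or_odd'.resolve_left fun hp2 => by
    have : Even (p - 1) := hef ▸ hfeven.mul_left e
    simp [hp2] at this
  have hβ' : IsPrimitiveRoot β (p ^ m) := hβ ▸ IsPrimitiveRoot.orderOf β
  have hshift : ∀ v, halfGaussTotal β p m e f g (v + p ^ (m - 1) * (f / 2))
      = halfGaussTotal β p m e f g v + 1 := fun v => by
    rw [eq_sub_of_add_eq' (halfGaussTotal_add_shift hp hodd hm hβ' hroot hef hfeven v),
      CharTwo.sub_eq_add, CharTwo.neg_eq, add_comm]
  obtain ⟨t, -, ht⟩ := h2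
  have hsq : ∀ v, halfGaussTotal β p m e f g (v + h) = halfGaussTotal β p m e f g v ^ 2 :=
    fun v => by
      have h2mod : 2 ≡ g ^ (h + p ^ (m - 1) * f * t) [MOD p ^ m] :=
        (ZMod.natCast_eq_natCast_iff _ _ _).1 (by push_cast; exact ht)
      have hperiod :
          v + (h + p ^ (m - 1) * f * t) = v + h + 2 * (p ^ (m - 1) * (f / 2)) * t := by
        nth_rw 1 [← Nat.two_mul_div_two_of_even hfeven]
        ring
      rw [halfGaussTotal_sq hβ'.pow_eq_one h2mod, hperiod, apply_add_two_mul_mul hshift]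
  obtain ⟨n, k, hnk⟩ := exists_two_mul_mul_eq_mul_odd (p ^ (m - 1)) (hhalf ▸ hh)
  rw [hA]
  exact pow_four_ne_self_of_apply_add_eq_sq hshift hsq (hhalf ▸ hnk) v

/-- Proposition 2(4): if `2 ∈ D_h^{(p^m)}` with `δ₁ = f/2 ∤ h`, then
`A_v ∉ F₄` for every `v`, i.e. `A_v⁴ ≠ A_v`. -/
theorem A_not_mem_F4 (p m e f r g h : ℕ) (hp : p.Prime) (hop : Odd p)
    (hm : 1 ≤ m) (hr : 1 ≤ r) (hf : f = 2 ^ r) (he : 0 < e) (hef : p - 1 = e * f)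
    (hroot : ∀ j, 1 ≤ j → j ≤ m → orderOf (g : ZMod (p ^ j)) = Nat.totient (p ^ j))
    (h2 : ∃ t < e, (2 : ZMod (p ^ m)) = (g : ZMod (p ^ m)) ^ (h + p ^ (m - 1) * f * t))
    (hh : ¬ (f / 2) ∣ h)
    {F : Type*} [Field F] (hchar : CharP F 2) (β : F) (hβ : orderOf β = p ^ m) :
    let A : ℕ → F := fun v => ∑ s ∈ Finset.Icc 1 m,
      ∑ i ∈ Finset.range (p ^ (s - 1) * f / 2), ∑ t ∈ Finset.range e,
        β ^ (p ^ (m - s) * g ^ (v + i + p ^ (s - 1) * f * t))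
    ∀ v : ℕ, (A v) ^ 4 ≠ A v :=
  A_not_mem_F4_general p m e f r g h hp hm hr hf hef hroot h2 hh hchar β hβ
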